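/- Let F : CohI^n → CohI be a normal functor. The map sending a clique c ⊑ Tr(F) to the family c_{X⃗} = { F(ι₁,…,ιₙ)(y) | ⟨Y⃗⟩y ∈ c, and ι_i : Y_i ↪ X_i are embeddings } is a bijection from the set of cliques of the trace Tr(F) to the set of uniform families of cliques of F. -/

import Mathlib

/-!
A clique `c` of `Tr F` is sent to the family of all instances of its normal forms. These are
pairwise coherent because coherence of normal forms is coherence of all their common
instances. The family is uniform because `F` preserves pullbacks: if `F ι x` is an instance of a
normal form `e`, pulling `ι` back along the instantiating embedding yields an element over both,
and `e`, being initial in its slice, maps to it, so `x` itself is an instance of `e`.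

A normal form is an instance of another one only if the two are isomorphic, so `c` is recovered
as the set of normal forms whose generic element belongs to the family. Conversely, as `F`
preserves filtered colimits, every `x ∈ F X` comes from a finite subtuple of `X`, and an element
over `x` on finite webs of least total size is a normal form; a uniform family `u` is therefore
the instantiation of the clique of normal forms whose generic element lies in `u`.
-/

open CategoryTheory Limits

/-- A coherence space: a web together with a reflexive symmetric coherence relation. -/
structure CohSpace : Type 1 where
  web : Type
  coh : web → web → Prop
  refl : ∀ x, coh x x
  symm : ∀ {x y}, coh x y → coh y x

/-- An embedding of coherence spaces: an injection preserving and reflecting coherence. -/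
@[ext]
structure CohEmb (X Y : CohSpace) : Type where
  toFun : X.web → Y.web
  inj : Function.Injective toFun
  coh_iff : ∀ x x', X.coh x x' ↔ Y.coh (toFun x) (toFun x')

/-- The category `CohI` of coherence spaces and embeddings. -/
instance : Category CohSpace where
  Hom := CohEmb
  id X := ⟨id, fun _ _ h => h, fun _ _ => Iff.rfl⟩
  comp f g := ⟨g.toFun ∘ f.toFun, g.inj.comp f.inj,
    fun x x' => (f.coh_iff x x').trans (g.coh_iff _ _)⟩
  id_comp _ := rfl
  comp_id _ := rfl
  assoc _ _ _ := rfl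

/-- A clique: a set of pairwise coherent points. -/
def CohSpace.IsClique (X : CohSpace) (c : Set X.web) : Prop :=
  ∀ ⦃x⦄, x ∈ c → ∀ ⦃y⦄, y ∈ c → X.coh x y

/-- Linear negation (dual) of a coherence space. -/
def CohSpace.dual (X : CohSpace) : CohSpace where
  web := X.web
  coh x y := x = y ∨ ¬ X.coh x y
  refl _ := Or.inl rfl
  symm h := h.elim (fun h' => Or.inl h'.symm) (fun h' => Or.inr fun hc => h' (X.symm hc))

/-- Tensor product of coherence spaces. -/
def CohSpace.tens (X Y : CohSpace) : CohSpace where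
  web := X.web × Y.web
  coh p q := X.coh p.1 q.1 ∧ Y.coh p.2 q.2
  refl p := ⟨X.refl p.1, Y.refl p.2⟩
  symm h := ⟨X.symm h.1, Y.symm h.2⟩

/-- Direct sum (`⊕`) of coherence spaces. -/
def CohSpace.sum (X Y : CohSpace) : CohSpace where
  web := X.web ⊕ Y.web
  coh := Sum.LiftRel X.coh Y.coh
  refl x := by cases x with
    | inl a => exact Sum.LiftRel.inl (X.refl a)
    | inr b => exact Sum.LiftRel.inr (Y.refl b)
  symm h := by cases h with
    | inl h => exact Sum.LiftRel.inl (X.symm h)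
    | inr h => exact Sum.LiftRel.inr (Y.symm h)

/-- Linear implication `X ⊸ Y := (X ⊗ Y^⊥)^⊥`. -/
def CohSpace.lolly (X Y : CohSpace) : CohSpace := (X.tens Y.dual).dual

/-- The with connective `X & Y := (X^⊥ ⊕ Y^⊥)^⊥`. -/
def CohSpace.withc (X Y : CohSpace) : CohSpace := (X.dual.sum Y.dual).dual

/-- The one-point coherence space (interpretation of `1` and `⊥`). -/
def oneCoh : CohSpace where
  web := PUnit
  coh _ _ := True
  refl _ := trivial
  symm _ := trivial

/-- The empty coherence space (interpretation of `0` and `⊤`). -/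
def topCoh : CohSpace where
  web := Empty
  coh x _ := x.elim
  refl x := x.elim
  symm {x} _ := x.elim

/-- The induced embedding between duals. -/
def CohEmb.dualMap {X Y : CohSpace} (f : X ⟶ Y) : X.dual ⟶ Y.dual where
  toFun := f.toFun
  inj := f.inj
  coh_iff x x' := by
    constructor
    · rintro (rfl | h)
      · exact Or.inl rfl
      · exact Or.inr fun hc => h ((f.coh_iff _ _).2 hc)
    · rintro (h | h)
      · exact Or.inl (f.inj h)
      · exact Or.inr fun hc => h ((f.coh_iff _ _).1 hc)

/-- The induced embedding between tensor products. -/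
def CohEmb.tensMap {X X' Y Y' : CohSpace} (f : X ⟶ X') (g : Y ⟶ Y') :
    X.tens Y ⟶ X'.tens Y' where
  toFun := Prod.map f.toFun g.toFun
  inj := f.inj.prodMap g.inj
  coh_iff p q := and_congr (f.coh_iff _ _) (g.coh_iff _ _)

/-- The induced embedding between direct sums. -/
def CohEmb.sumMap {X X' Y Y' : CohSpace} (f : X ⟶ X') (g : Y ⟶ Y') :
    X.sum Y ⟶ X'.sum Y' where
  toFun := Sum.map f.toFun g.toFun
  inj := f.inj.sumMap g.inj
  coh_iff x x' := by
    constructor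
    · intro h
      cases h with
      | inl h => exact Sum.LiftRel.inl ((f.coh_iff _ _).1 h)
      | inr h => exact Sum.LiftRel.inr ((g.coh_iff _ _).1 h)
    · intro h
      cases x with
      | inl a => cases x' with
        | inl a' => exact Sum.LiftRel.inl ((f.coh_iff _ _).2 (by cases h; assumption))
        | inr b' => exact absurd h (by intro hh; cases hh)
      | inr b => cases x' with
        | inl a' => exact absurd h (by intro hh; cases hh)
        | inr b' => exact Sum.LiftRel.inr ((g.coh_iff _ _).2 (by cases h; assumption))

/-- Linear negation as a covariant endofunctor of `CohI`. -/
def dualFunctor : CohSpace ⥤ CohSpace where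
  obj := CohSpace.dual
  map := CohEmb.dualMap
  map_id _ := rfl
  map_comp _ _ := rfl

/-- Tensor as a functor on the product category. -/
def tensorFunctor : CohSpace × CohSpace ⥤ CohSpace where
  obj p := p.1.tens p.2
  map f := CohEmb.tensMap f.1 f.2
  map_id _ := rfl
  map_comp _ _ := rfl

/-- Sum as a functor on the product category. -/
def sumFunctor : CohSpace × CohSpace ⥤ CohSpace where
  obj p := p.1.sum p.2
  map f := CohEmb.sumMap f.1 f.2
  map_id p := by
    apply CohEmb.ext
    funext x
    cases x <;> rfl
  map_comp f g := by
    apply CohEmb.ext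
    funext x
    cases x <;> rfl

/-- The category `CohI^n`. -/
abbrev CohTuple (n : ℕ) := Fin n → CohSpace

/-- A normal functor: one preserving filtered colimits and finite pullbacks. -/
def IsNormalFunctor {C : Type*} {D : Type*} [Category C] [Category D] (F : C ⥤ D) : Prop :=
  PreservesFilteredColimits F ∧ PreservesLimitsOfShape WalkingCospan F

/-- The web functor `CohI ⥤ Set`. -/
def webF : CohSpace ⥤ Type where
  obj X := X.web
  map f := TypeCat.ofHom f.toFun
  map_id _ := rfl
  map_comp _ _ := rfl

/-- The category of elements of the web presheaf `|F|` of `F : CohI^n ⥤ CohI`. -/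
abbrev Elts {n : ℕ} (F : CohTuple n ⥤ CohSpace) := (F ⋙ webF).Elements

/-- `(X⃗, x)` is a normal form of `F`: its webs are finite and it is initial in its own
slice category of `El(|F|)`. -/
def IsNormalForm {n : ℕ} {F : CohTuple n ⥤ CohSpace} (e : Elts F) : Prop :=
  (∀ i, Finite (e.1 i).web) ∧
    ∀ (f : Elts F) (u : f ⟶ e), ∃! v : e ⟶ f, v ≫ u = 𝟙 e

/-- The pointwise dual functor `F^⊥`. -/
def dualF {n : ℕ} (F : CohTuple n ⥤ CohSpace) : CohTuple n ⥤ CohSpace := F ⋙ dualFunctor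

/-- The pointwise tensor functor `F ⊗ G`. -/
def tensF {n : ℕ} (F G : CohTuple n ⥤ CohSpace) : CohTuple n ⥤ CohSpace :=
  F.prod' G ⋙ tensorFunctor

/-- The pointwise sum functor `F ⊕ G`. -/
def sumF {n : ℕ} (F G : CohTuple n ⥤ CohSpace) : CohTuple n ⥤ CohSpace :=
  F.prod' G ⋙ sumFunctor

/-- The pointwise linear implication functor `F ⊸ G`. -/
def lollyF {n : ℕ} (F G : CohTuple n ⥤ CohSpace) : CohTuple n ⥤ CohSpace :=
  dualF (tensF F (dualF G))

/-- The degree of a normal functor: the supremum of the cardinalities of the webs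
occurring in its normal forms. -/
noncomputable def degree {n : ℕ} (F : CohTuple n ⥤ CohSpace) : ℕ∞ :=
  ⨆ (e : Elts F) (_ : IsNormalForm e) (i : Fin n), (Nat.card (e.1 i).web : ℕ∞)

/-- `F` sends coherence spaces with finite webs to coherence spaces with finite webs. -/
def PreservesFiniteWebs {n : ℕ} (F : CohTuple n ⥤ CohSpace) : Prop :=
  ∀ X : CohTuple n, (∀ i, Finite (X i).web) → Finite (F.obj X).web

/-- A finite normal functor: one preserving finiteness of webs and of finite degree. -/
def IsFiniteFunctor {n : ℕ} (F : CohTuple n ⥤ CohSpace) : Prop :=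
  PreservesFiniteWebs F ∧ degree F < ⊤

/-- `NF(F)`: the set of isomorphism classes of normal forms of `F`. -/
def NFSet {n : ℕ} (F : CohTuple n ⥤ CohSpace) :
    Set (Quotient (isIsomorphicSetoid (Elts F))) :=
  { q | ∃ e : Elts F, IsNormalForm e ∧ Quotient.mk _ e = q }

/-- A uniform family of cliques of `F : CohI^n ⥤ CohI`. -/
def IsUniformFamily {n : ℕ} (F : CohTuple n ⥤ CohSpace)
    (c : ∀ X : CohTuple n, Set (F.obj X).web) : Prop :=
  (∀ X, (F.obj X).IsClique (c X)) ∧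
    ∀ (X Y : CohTuple n) (ι : X ⟶ Y), c X = (F.map ι).toFun ⁻¹' c Y

/-- Coherence of two normal forms: all their instantiations along embeddings into a
common tuple are coherent. -/
def NFCoherent {n : ℕ} {F : CohTuple n ⥤ CohSpace} (e e' : Elts F) : Prop :=
  ∀ (Z : CohTuple n) (ι : e.1 ⟶ Z) (κ : e'.1 ⟶ Z),
    (F.obj Z).coh ((F.map ι).toFun e.2) ((F.map κ).toFun e'.2)

/-- A coherence space structure on a canonical finite web `Fin k`. -/
structure FinCohData where
  k : ℕ
  r : Fin k → Fin k → Prop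
  refl : ∀ i, r i i
  symm : ∀ {i j}, r i j → r j i

/-- The coherence space associated to a `FinCohData`. -/
def FinCohData.toCoh (d : FinCohData) : CohSpace where
  web := Fin d.k
  coh := d.r
  refl := d.refl
  symm := d.symm

/-- A canonical tuple of finite coherence spaces. -/
def canonTuple {n : ℕ} (d : Fin n → FinCohData) : CohTuple n := fun i => (d i).toCoh

/-- Self-coherent normal forms of `F` carried by canonical tuples of finite coherence
spaces; the web of the trace is the set of their isomorphism classes. -/
def CanonNF {n : ℕ} (F : CohTuple n ⥤ CohSpace) : Type :=
  Σ d : Fin n → FinCohData,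
    { x : (F.obj (canonTuple d)).web //
        IsNormalForm (F := F) ⟨canonTuple d, x⟩ ∧
          NFCoherent (F := F) ⟨canonTuple d, x⟩ ⟨canonTuple d, x⟩ }

/-- The element of `El(|F|)` carried by a canonical normal form. -/
def CanonNF.toElts {n : ℕ} {F : CohTuple n ⥤ CohSpace} (c : CanonNF F) : Elts F :=
  ⟨canonTuple c.1, c.2.1⟩

/-- Canonical normal forms are identified when isomorphic in `El(|F|)`. -/
def traceSetoid {n : ℕ} (F : CohTuple n ⥤ CohSpace) : Setoid (CanonNF F) :=
  (isIsomorphicSetoid (Elts F)).comap CanonNF.toElts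

/-- The trace `Tr(F)`: isomorphism classes of self-coherent normal forms, with the
coherence relation between normal forms. -/
def Tr {n : ℕ} (F : CohTuple n ⥤ CohSpace) : CohSpace where
  web := Quotient (traceSetoid F)
  coh q q' := ∃ c c' : CanonNF F,
    Quotient.mk (traceSetoid F) c = q ∧ Quotient.mk (traceSetoid F) c' = q' ∧
      NFCoherent c.toElts c'.toElts
  refl q := by
    obtain ⟨c, rfl⟩ := Quotient.exists_rep q
    exact ⟨c, c, rfl, rfl, c.2.2.2⟩
  symm h := by
    obtain ⟨c, c', h1, h2, h3⟩ := h
    exact ⟨c', c, h2, h1, fun Z ι κ => (F.obj Z).symm (h3 Z κ ι)⟩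

/-- The family of functors whose pointwise pairing computes `Z ↦ (X₁,…,Xₙ,Z)`. -/
def gfam {n : ℕ} (X : CohTuple n) (i : Fin (n + 1)) : CohTuple 1 ⥤ CohSpace :=
  if h : (i : ℕ) < n then (Functor.const (CohTuple 1)).obj (X ⟨i, h⟩)
  else Pi.eval (fun _ : Fin 1 => CohSpace) 0

/-- The partial application `F(X₁,…,Xₙ,−)` of `F : CohI^(n+1) ⥤ CohI`. -/
def partialApp {n : ℕ} (F : CohTuple (n + 1) ⥤ CohSpace) (X : CohTuple n) :
    CohTuple 1 ⥤ CohSpace :=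
  Functor.pi' (gfam X) ⋙ F

/-- The embedding `(X⃗, Z) ↪ (Y⃗, Z)` induced componentwise by `ι : X⃗ ↪ Y⃗`. -/
def extHom {n : ℕ} {X Y : CohTuple n} (ι : X ⟶ Y) (Z : CohTuple 1) (i : Fin (n + 1)) :
    (gfam X i).obj Z ⟶ (gfam Y i).obj Z := by
  by_cases h : (i : ℕ) < n
  · simp only [gfam, dif_pos h]
    exact ι ⟨i, h⟩
  · simp only [gfam, dif_neg h]
    exact 𝟙 (Z 0)

/-- The embedding `extHom` as a morphism in `CohI^(n+1)`. -/
def extHomPi {n : ℕ} {X Y : CohTuple n} (ι : X ⟶ Y) (Z : CohTuple 1) :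
    (Functor.pi' (gfam X)).obj Z ⟶ (Functor.pi' (gfam Y)).obj Z :=
  fun i => extHom ι Z i

/-- Transport along an object equality `G.obj X = Tr (partialApp F X)`. -/
def trWebCast {n : ℕ} {F : CohTuple (n + 1) ⥤ CohSpace} {G : CohTuple n ⥤ CohSpace}
    (h : ∀ X, G.obj X = Tr (partialApp F X)) (X : CohTuple n) :
    (Tr (partialApp F X)).web → (G.obj X).web :=
  fun q => cast (congrArg CohSpace.web (h X)).symm q

/-- `G` acts on embeddings the way `∀(F)` does: normal forms are transported by
keeping the bound variables and substituting along `ι` on the free ones. -/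
def ForallAction {n : ℕ} (F : CohTuple (n + 1) ⥤ CohSpace) (G : CohTuple n ⥤ CohSpace)
    (hobj : ∀ X, G.obj X = Tr (partialApp F X)) : Prop :=
  ∀ (X Y : CohTuple n) (ι : X ⟶ Y) (c : CanonNF (partialApp F X)),
    ∃ c' : CanonNF (partialApp F Y),
      (G.map ι).toFun (trWebCast hobj X (Quotient.mk (traceSetoid _) c))
          = trWebCast hobj Y (Quotient.mk (traceSetoid _) c') ∧
        c'.1 = c.1 ∧
        HEq c'.2.1 ((F.map (extHomPi ι (canonTuple c.1))).toFun c.2.1)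

/-- `G` is (a presentation of) the functor `∀(F)`. -/
def IsForallExtension {n : ℕ} (F : CohTuple (n + 1) ⥤ CohSpace)
    (G : CohTuple n ⥤ CohSpace) : Prop :=
  ∃ hobj : ∀ X, G.obj X = Tr (partialApp F X), ForallAction F G hobj

/-- The uniform family of cliques obtained by instantiating a clique of the trace. -/
def instFam {n : ℕ} (F : CohTuple n ⥤ CohSpace) (c : Set (Tr F).web) :
    ∀ X : CohTuple n, Set (F.obj X).web := fun X =>
  { x | ∃ (d : CanonNF F) (ι : canonTuple d.1 ⟶ X),
      Quotient.mk (traceSetoid F) d ∈ c ∧ (F.map ι).toFun d.2.1 = x }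

namespace CohEmb

variable {X Y : CohSpace}

lemma congr_toFun {f g : X ⟶ Y} (h : f = g) (x : X.web) : f.toFun x = g.toFun x := by
  rw [h]

lemma isIso_of_bijective (f : X ⟶ Y) (hf : Function.Bijective f.toFun) : IsIso f := by
  let e := Equiv.ofBijective _ hf
  refine ⟨⟨⟨e.symm, e.symm.injective, fun y y' => ?_⟩, ?_, ?_⟩⟩
  · rw [f.coh_iff]
    exact iff_of_eq (congrArg₂ _ (e.apply_symm_apply y).symm (e.apply_symm_apply y').symm)
  · exact CohEmb.ext (funext e.symm_apply_apply)
  · exact CohEmb.ext (funext e.apply_symm_apply)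

end CohEmb

lemma CategoryTheory.Functor.map_comp_toFun {C : Type*} [Category C] (F : C ⥤ CohSpace)
    {X Y Z : C} (f : X ⟶ Y) (g : Y ⟶ Z) (x : (F.obj X).web) :
    (F.map (f ≫ g)).toFun x = (F.map g).toFun ((F.map f).toFun x) := by
  rw [F.map_comp]; rfl

lemma CategoryTheory.Functor.map_id_toFun {C : Type*} [Category C] (F : C ⥤ CohSpace) (X : C)
    (x : (F.obj X).web) : (F.map (𝟙 X)).toFun x = x := by
  rw [F.map_id]; rfl

namespace CohSpace

def sub (X : CohSpace) (s : Set X.web) : CohSpace where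
  web := s
  coh a b := X.coh a b
  refl a := X.refl a
  symm h := X.symm h

def subEmb (X : CohSpace) (s : Set X.web) : X.sub s ⟶ X :=
  ⟨Subtype.val, Subtype.val_injective, fun _ _ => Iff.rfl⟩

def point {X : CohSpace} (x : X.web) : oneCoh ⟶ X :=
  ⟨fun _ => x, fun _ _ _ => rfl, fun _ _ => ⟨fun _ => X.refl x, fun _ => trivial⟩⟩

lemma exists_eq_of_isColimit {J : Type*} [Category J] {K : J ⥤ CohSpace} {c : Cocone K}
    (t : IsColimit c) (p : c.pt.web) : ∃ j y, (c.ι.app j).toFun y = p := by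
  -- `c` factors through the subspace on the joint image of its legs
  let s : Set c.pt.web := {q | ∃ j y, (c.ι.app j).toFun y = q}
  let c' : Cocone K :=
    { pt := c.pt.sub s
      ι :=
        { app j := ⟨fun y => ⟨_, j, y, rfl⟩,
            fun _ _ h => (c.ι.app j).inj (congrArg Subtype.val h), (c.ι.app j).coh_iff⟩
          naturality _ _ f := CohEmb.ext (funext fun y => Subtype.ext
            (CohEmb.congr_toFun (c.w f) y)) } }
  have hid : t.desc c' ≫ c.pt.subEmb s = 𝟙 c.pt :=
    t.hom_ext fun j => by rw [t.fac_assoc, Category.comp_id]; rfl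
  obtain ⟨j, y, hy⟩ := ((t.desc c').toFun p).2
  exact ⟨j, y, hy.trans (CohEmb.congr_toFun hid p)⟩

lemma exists_eq_of_isLimit {X Y Z : CohSpace} {f : X ⟶ Z} {g : Y ⟶ Z} {s : PullbackCone f g}
    (t : IsLimit s) {x : X.web} {y : Y.web} (h : f.toFun x = g.toFun y) :
    ∃ p, s.fst.toFun p = x ∧ s.snd.toFun p = y := by
  have hxy : point x ≫ f = point y ≫ g := CohEmb.ext (funext fun _ => h)
  exact ⟨(t.lift (PullbackCone.mk _ _ hxy)).toFun PUnit.unit,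
    CohEmb.congr_toFun (t.fac _ WalkingCospan.left) _,
    CohEmb.congr_toFun (t.fac _ WalkingCospan.right) _⟩

section Pullback

variable {X Y Z : CohSpace} (f : X ⟶ Z) (g : Y ⟶ Z)

def pullback : CohSpace where
  web := {p : X.web × Y.web // f.toFun p.1 = g.toFun p.2}
  coh p q := X.coh p.1.1 q.1.1
  refl p := X.refl p.1.1
  symm h := X.symm h

def pullbackFst : pullback f g ⟶ X where
  toFun p := p.1.1
  inj p q h := Subtype.ext (Prod.ext h (g.inj (p.2.symm.trans ((congrArg f.toFun h).trans q.2))))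
  coh_iff _ _ := Iff.rfl

def pullbackSnd : pullback f g ⟶ Y where
  toFun p := p.1.2
  inj p q h := Subtype.ext (Prod.ext (f.inj (p.2.trans ((congrArg g.toFun h).trans q.2.symm))) h)
  coh_iff p q := by
    change X.coh p.1.1 q.1.1 ↔ _
    rw [f.coh_iff, p.2, q.2, ← g.coh_iff]

end Pullback

end CohSpace

namespace CohTuple

variable {n : ℕ}

section Pullback

variable {X Y Z : CohTuple n} (ι : X ⟶ Z) (κ : Y ⟶ Z)

def pullback : CohTuple n := fun i => CohSpace.pullback (ι i) (κ i)

def pullbackFst : pullback ι κ ⟶ X := fun i => CohSpace.pullbackFst (ι i) (κ i)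

def pullbackSnd : pullback ι κ ⟶ Y := fun i => CohSpace.pullbackSnd (ι i) (κ i)

lemma pullback_condition : pullbackFst ι κ ≫ ι = pullbackSnd ι κ ≫ κ :=
  funext fun _ => CohEmb.ext (funext fun p => p.2)

def pullbackConeIsLimit : IsLimit (PullbackCone.mk _ _ (pullback_condition ι κ)) :=
  PullbackCone.IsLimit.mk (pullback_condition ι κ)
    (fun s i => ⟨fun a => ⟨((s.fst i).toFun a, (s.snd i).toFun a),
        CohEmb.congr_toFun (congrFun s.condition i) a⟩,
      fun _ _ h => (s.fst i).inj (congrArg (fun p => p.1.1) h), (s.fst i).coh_iff⟩)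
    (fun _ => rfl) (fun _ => rfl)
    (fun _ _ h₁ h₂ => funext fun i => CohEmb.ext (funext fun a => Subtype.ext (Prod.ext
      (CohEmb.congr_toFun (congrFun h₁ i) a) (CohEmb.congr_toFun (congrFun h₂ i) a))))

end Pullback

section FiniteSubtuples

variable (X : CohTuple n)

def finSubtupleDiagram : Finset (Σ i, (X i).web) ⥤ CohTuple n where
  obj S i := (X i).sub {a | ⟨i, a⟩ ∈ S}
  map h i := ⟨fun a => ⟨a.1, leOfHom h a.2⟩, fun _ _ h => Subtype.ext (Subtype.mk.inj h),
    fun _ _ => Iff.rfl⟩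

def finSubtupleCocone : Cocone (finSubtupleDiagram X) where
  pt := X
  ι := { app S i := (X i).subEmb _ }

variable {X}

lemma cocone_finSubtuple_app_eq (s : Cocone (finSubtupleDiagram X)) {S T : Finset (Σ i, (X i).web)}
    {i : Fin n} {a : (X i).web} (hS : ⟨i, a⟩ ∈ S) (hT : ⟨i, a⟩ ∈ T) :
    (s.ι.app S i).toFun (⟨a, hS⟩ : ((finSubtupleDiagram X).obj S i).web) =
      (s.ι.app T i).toFun (⟨a, hT⟩ : ((finSubtupleDiagram X).obj T i).web) := by
  classical
  have hU {V : Finset (Σ i, (X i).web)} (hV : V ≤ S ∪ T) (ha : ⟨i, a⟩ ∈ V) :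
      (s.ι.app V i).toFun (⟨a, ha⟩ : ((finSubtupleDiagram X).obj V i).web) =
        (s.ι.app (S ∪ T) i).toFun ⟨a, hV ha⟩ :=
    (CohEmb.congr_toFun (congrFun (s.w (homOfLE hV)) i) ⟨a, ha⟩).symm
  rw [hU Finset.subset_union_left hS, hU Finset.subset_union_right hT]

def finSubtupleDesc (s : Cocone (finSubtupleDiagram X)) : X ⟶ s.pt := fun i =>
  { toFun a := (s.ι.app ({⟨i, a⟩} : Finset (Σ i, (X i).web)) i).toFun
      ⟨a, Finset.mem_singleton_self _⟩
    inj a b h := by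
      classical
      let S : Finset (Σ i, (X i).web) := {⟨i, a⟩, ⟨i, b⟩}
      have ha : ⟨i, a⟩ ∈ S := by simp [S]
      have hb : ⟨i, b⟩ ∈ S := by simp [S]
      dsimp only at h
      rw [cocone_finSubtuple_app_eq s _ ha, cocone_finSubtuple_app_eq s _ hb] at h
      exact congrArg Subtype.val ((s.ι.app S i).inj h)
    coh_iff a b := by
      classical
      let S : Finset (Σ i, (X i).web) := {⟨i, a⟩, ⟨i, b⟩}
      have ha : ⟨i, a⟩ ∈ S := by simp [S]
      have hb : ⟨i, b⟩ ∈ S := by simp [S]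
      rw [cocone_finSubtuple_app_eq s _ ha, cocone_finSubtuple_app_eq s _ hb]
      exact (s.ι.app S i).coh_iff ⟨a, ha⟩ ⟨b, hb⟩ }

variable (X)

def finSubtupleCoconeIsColimit : IsColimit (finSubtupleCocone X) where
  desc := finSubtupleDesc
  fac s S := funext fun i => CohEmb.ext (funext fun a =>
    cocone_finSubtuple_app_eq s (Finset.mem_singleton_self (⟨i, a.1⟩ : Σ i, (X i).web)) a.2)
  uniq s m hm := funext fun i => CohEmb.ext (funext fun a => by
    have := CohEmb.congr_toFun (congrFun (hm {⟨i, a⟩}) i) ⟨a, Finset.mem_singleton_self _⟩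
    exact this)

end FiniteSubtuples

end CohTuple

lemma Function.bijective_of_sum_natCard_le {ι : Type*} [Fintype ι] {α β : ι → Type*}
    [∀ i, Finite (β i)] {f : ∀ i, α i → β i} (hf : ∀ i, Function.Injective (f i))
    (h : ∑ i, Nat.card (β i) ≤ ∑ i, Nat.card (α i)) (i : ι) :
    Function.Bijective (f i) := by
  have := fun i => Finite.of_injective _ (hf i)
  have hle : ∀ i, Nat.card (α i) ≤ Nat.card (β i) :=
    fun i => Nat.card_le_card_of_injective _ (hf i)
  have hcard := (Finset.sum_eq_sum_iff_of_le fun i _ => hle i).1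
    (le_antisymm (Finset.sum_le_sum fun i _ => hle i) h) i (Finset.mem_univ i)
  exact (Nat.bijective_iff_injective_and_card _).2 ⟨hf i, hcard⟩

section NormalForms

variable {n : ℕ} {F : CohTuple n ⥤ CohSpace}

lemma Elts.map_toFun_snd {e e' : Elts F} (u : e ⟶ e') : (F.map u.val).toFun e.2 = e'.2 := u.2

lemma Elts.map_comp_toFun_snd {e e' : Elts F} (u : e ⟶ e') {X : CohTuple n} (ι : e'.1 ⟶ X) :
    (F.map (u.val ≫ ι)).toFun e.2 = (F.map ι).toFun e'.2 :=
  (F.map_comp_toFun _ _ _).trans (congrArg _ (Elts.map_toFun_snd u))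

lemma exists_finite_factor [PreservesFilteredColimits F] {X : CohTuple n}
    (x : (F.obj X).web) :
    ∃ (W : CohTuple n) (w : (F.obj W).web) (j : W ⟶ X),
      (∀ i, Finite (W i).web) ∧ (F.map j).toFun w = x := by
  obtain ⟨S, w, hw⟩ := CohSpace.exists_eq_of_isColimit
    (isColimitOfPreserves F (CohTuple.finSubtupleCoconeIsColimit X)) x
  exact ⟨_, w, _, fun i => (S.finite_toSet.preimage sigma_mk_injective.injOn).to_subtype, hw⟩

lemma isIso_of_sum_natCard_le {e f : Elts F} (u : f ⟶ e) [∀ i, Finite (e.1 i).web]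
    (h : ∑ i, Nat.card (e.1 i).web ≤ ∑ i, Nat.card (f.1 i).web) : IsIso u := by
  have : IsIso u.val := (isIso_pi_iff _).2 fun i => CohEmb.isIso_of_bijective _
    (Function.bijective_of_sum_natCard_le (fun i => (u.val i).inj) h i)
  have : IsIso ((CategoryOfElements.π _).map u) := this
  exact isIso_of_reflects_iso u (CategoryOfElements.π _)

lemma isNormalForm_of_forall_isIso {e : Elts F} (hfin : ∀ i, Finite (e.1 i).web)
    (h : ∀ (f : Elts F) (u : f ⟶ e), IsIso u) : IsNormalForm e :=
  ⟨hfin, fun _ u =>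
    have := h _ u
    ⟨inv u, IsIso.inv_hom_id u, fun _ => IsIso.eq_inv_of_inv_hom_id⟩⟩

lemma exists_isNormalForm_over [PreservesFilteredColimits F] {X : CohTuple n}
    (x : (F.obj X).web) :
    ∃ (W : CohTuple n) (w : (F.obj W).web) (j : W ⟶ X),
      (F.map j).toFun w = x ∧ IsNormalForm (⟨W, w⟩ : Elts F) := by
  let T : Set ℕ := {k | ∃ (W : CohTuple n) (w : (F.obj W).web) (j : W ⟶ X),
    (∀ i, Finite (W i).web) ∧ (F.map j).toFun w = x ∧ ∑ i, Nat.card (W i).web = k}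
  have hT : T.Nonempty := by
    obtain ⟨W, w, j, hfin, hw⟩ := exists_finite_factor x
    exact ⟨_, W, w, j, hfin, hw, rfl⟩
  obtain ⟨W, w, j, hfin, hw, hmin⟩ := Nat.sInf_mem hT
  refine ⟨W, w, j, hw, isNormalForm_of_forall_isIso hfin fun f u => ?_⟩
  refine isIso_of_sum_natCard_le u (hmin ▸ Nat.sInf_le ⟨f.1, f.2, u.val ≫ j,
    fun i => Finite.of_injective _ (u.val i).inj, ?_, rfl⟩)
  exact (Elts.map_comp_toFun_snd u j).trans hw

lemma exists_iso_canonTuple (W : CohTuple n) [∀ i, Finite (W i).web] :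
    ∃ d, Nonempty (canonTuple d ≅ W) := by
  choose k e using fun i => Finite.exists_equiv_fin (W i).web
  let d i : FinCohData := ⟨k i, fun a b => (W i).coh ((e i).some.symm a) ((e i).some.symm b),
    fun _ => (W i).refl _, (W i).symm⟩
  let φ : canonTuple d ⟶ W := fun i => ⟨(e i).some.symm, (e i).some.symm.injective,
    fun _ _ => Iff.rfl⟩
  have : IsIso φ := (isIso_pi_iff φ).2 fun i =>
    CohEmb.isIso_of_bijective _ (e i).some.symm.bijective
  exact ⟨d, ⟨asIso φ⟩⟩

lemma IsNormalForm.of_iso {e e' : Elts F} (he : IsNormalForm e) (φ : e ≅ e') :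
    IsNormalForm e' := by
  refine ⟨fun i => have := he.1 i; Finite.of_injective _ (φ.inv.val i).inj, fun f u => ?_⟩
  obtain ⟨v, hv, huniq⟩ := he.2 f (u ≫ φ.inv)
  refine ⟨φ.inv ≫ v, ?_, fun w hw => ?_⟩
  · simpa using congrArg (fun g => φ.inv ≫ g ≫ φ.hom) hv
  · have hw : w ≫ u = 𝟙 e' := hw
    have hφw : (φ.hom ≫ w) ≫ u ≫ φ.inv = 𝟙 e := by
      rw [Category.assoc, ← Category.assoc w, hw, Category.id_comp, φ.hom_inv_id]
    rw [← huniq _ hφw, φ.inv_hom_id_assoc]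

lemma IsNormalForm.isIso_of_hom {e e' : Elts F} (he : IsNormalForm e) (he' : IsNormalForm e')
    (u : e' ⟶ e) : IsIso u := by
  obtain ⟨v, hv, -⟩ := he.2 e' u
  obtain ⟨w, hw, -⟩ := he'.2 e v
  have hwu : w = u := by
    rw [← Category.comp_id w, ← hv, ← Category.assoc, hw, Category.id_comp]
  exact ⟨v, hwu ▸ hw, hv⟩

lemma exists_canonTuple_isNormalForm_over [PreservesFilteredColimits F] {X : CohTuple n}
    (x : (F.obj X).web) :
    ∃ (d : Fin n → FinCohData) (y : (F.obj (canonTuple d)).web) (j : canonTuple d ⟶ X),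
      (F.map j).toFun y = x ∧ IsNormalForm (⟨canonTuple d, y⟩ : Elts F) := by
  obtain ⟨W, w, j, hw, hnf⟩ := exists_isNormalForm_over x
  have := hnf.1
  obtain ⟨d, ⟨φ⟩⟩ := exists_iso_canonTuple W
  have hφ : (F.map φ.hom).toFun ((F.map φ.inv).toFun w) = w := by
    rw [← F.map_comp_toFun, φ.inv_hom_id, F.map_id_toFun]
  refine ⟨d, _, φ.hom ≫ j, by rw [F.map_comp_toFun, hφ, hw], hnf.of_iso ?_⟩
  exact (CategoryOfElements.isoMk _ _ φ hφ).symm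

lemma exists_map_eq_of_map_eq [PreservesLimitsOfShape WalkingCospan F] {X Y Z : CohTuple n}
    {ι : X ⟶ Z} {κ : Y ⟶ Z} {x : (F.obj X).web} {y : (F.obj Y).web}
    (h : (F.map ι).toFun x = (F.map κ).toFun y) :
    ∃ (P : CohTuple n) (p : (F.obj P).web) (f : P ⟶ X) (g : P ⟶ Y),
      (F.map f).toFun p = x ∧ (F.map g).toFun p = y := by
  obtain ⟨p, hp⟩ := CohSpace.exists_eq_of_isLimit
    (isLimitPullbackConeMapOfIsLimit F _ (CohTuple.pullbackConeIsLimit ι κ)) h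
  exact ⟨_, p, _, _, hp⟩

lemma IsNormalForm.exists_map_eq [PreservesLimitsOfShape WalkingCospan F] {e : Elts F}
    (he : IsNormalForm e) {X Z : CohTuple n} {ι : X ⟶ Z} {κ : e.1 ⟶ Z} {x : (F.obj X).web}
    (h : (F.map ι).toFun x = (F.map κ).toFun e.2) :
    ∃ κ' : e.1 ⟶ X, (F.map κ').toFun e.2 = x := by
  obtain ⟨P, p, f, g, hf, hg⟩ := exists_map_eq_of_map_eq h
  obtain ⟨v, -⟩ := he.2 ⟨P, p⟩ ⟨g, hg⟩
  exact ⟨v.val ≫ f, (Elts.map_comp_toFun_snd v f).trans hf⟩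

end NormalForms

section Trace

variable {n : ℕ} {F : CohTuple n ⥤ CohSpace}

lemma mk_mem_iff_mem_instFam (c : Set (Tr F).web) (d : CanonNF F) :
    Quotient.mk _ d ∈ c ↔ d.2.1 ∈ instFam F c (canonTuple d.1) := by
  refine ⟨fun hd => ⟨d, 𝟙 _, hd, F.map_id_toFun _ _⟩, ?_⟩
  rintro ⟨d', κ, hd', hκ⟩
  let u : d'.toElts ⟶ d.toElts := ⟨κ, hκ⟩
  have := d.2.2.1.isIso_of_hom d'.2.2.1 u
  rwa [Quotient.sound (s := traceSetoid F) ⟨@asIso _ _ _ _ u this⟩] at hd'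

lemma instFam_injective : Function.Injective (instFam F) := by
  intro c c' h
  ext q
  obtain ⟨d, rfl⟩ := Quotient.exists_rep q
  have hc := mk_mem_iff_mem_instFam c d
  rw [h] at hc
  exact hc.trans (mk_mem_iff_mem_instFam c' d).symm

lemma instFam_isClique {c : Set (Tr F).web} (hc : (Tr F).IsClique c) (X : CohTuple n) :
    (F.obj X).IsClique (instFam F c X) := by
  rintro _ ⟨d, ι, hd, rfl⟩ _ ⟨d', ι', hd', rfl⟩
  obtain ⟨e, e', he, he', hcoh⟩ := hc hd hd'
  obtain ⟨φ⟩ := Quotient.exact he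
  obtain ⟨φ'⟩ := Quotient.exact he'
  convert hcoh X (φ.hom.val ≫ ι) (φ'.hom.val ≫ ι') using 2
  · exact (Elts.map_comp_toFun_snd φ.hom ι).symm
  · exact (Elts.map_comp_toFun_snd φ'.hom ι').symm

lemma instFam_eq_preimage [PreservesLimitsOfShape WalkingCospan F] (c : Set (Tr F).web)
    {X Y : CohTuple n} (ι : X ⟶ Y) :
    instFam F c X = (F.map ι).toFun ⁻¹' instFam F c Y := by
  ext x
  constructor
  · rintro ⟨d, κ, hd, rfl⟩
    exact ⟨d, κ ≫ ι, hd, F.map_comp_toFun _ _ _⟩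
  · rintro ⟨d, κ, hd, hκ⟩
    obtain ⟨κ', hκ'⟩ := d.2.2.1.exists_map_eq hκ.symm
    exact ⟨d, κ', hd, hκ'⟩

lemma isUniformFamily_instFam [PreservesLimitsOfShape WalkingCospan F] {c : Set (Tr F).web}
    (hc : (Tr F).IsClique c) : IsUniformFamily F (instFam F c) :=
  ⟨instFam_isClique hc, fun _ _ => instFam_eq_preimage c⟩

def traceClique (u : ∀ X : CohTuple n, Set (F.obj X).web) : Set (Tr F).web :=
  {q | ∃ d : CanonNF F, Quotient.mk _ d = q ∧ d.2.1 ∈ u (canonTuple d.1)}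

namespace IsUniformFamily

variable {u : ∀ X : CohTuple n, Set (F.obj X).web}

lemma map_mem_iff (hu : IsUniformFamily F u) {X Y : CohTuple n} (ι : X ⟶ Y)
    (x : (F.obj X).web) :
    (F.map ι).toFun x ∈ u Y ↔ x ∈ u X := by
  rw [hu.2 X Y ι]; rfl

lemma snd_mem_iff_of_hom (hu : IsUniformFamily F u) {e e' : Elts F} (f : e ⟶ e') :
    e.2 ∈ u e.1 ↔ e'.2 ∈ u e'.1 :=
  (hu.map_mem_iff f.val e.2).symm.trans
    (iff_of_eq (congrArg (· ∈ u e'.1) (Elts.map_toFun_snd f)))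

lemma nfCoherent (hu : IsUniformFamily F u) {e e' : Elts F} (he : e.2 ∈ u e.1)
    (he' : e'.2 ∈ u e'.1) : NFCoherent e e' :=
  fun Z ι κ => hu.1 Z ((hu.map_mem_iff ι _).2 he) ((hu.map_mem_iff κ _).2 he')

lemma mk_mem_traceClique_iff (hu : IsUniformFamily F u) (d : CanonNF F) :
    Quotient.mk _ d ∈ traceClique u ↔ d.2.1 ∈ u (canonTuple d.1) :=
  ⟨fun ⟨_, hd', hu'⟩ => (hu.snd_mem_iff_of_hom (Quotient.exact hd').some.hom).1 hu',
    fun h => ⟨d, rfl, h⟩⟩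

lemma isClique_traceClique (hu : IsUniformFamily F u) : (Tr F).IsClique (traceClique u) := by
  rintro _ ⟨d, rfl, hd⟩ _ ⟨d', rfl, hd'⟩
  exact ⟨d, d', rfl, rfl, hu.nfCoherent hd hd'⟩

lemma instFam_traceClique [PreservesFilteredColimits F] (hu : IsUniformFamily F u) :
    instFam F (traceClique u) = u := by
  funext X
  ext x
  constructor
  · rintro ⟨d, ι, hd, rfl⟩
    exact (hu.map_mem_iff ι _).2 ((hu.mk_mem_traceClique_iff d).1 hd)
  · intro hx
    obtain ⟨d, y, j, rfl, hnf⟩ := exists_canonTuple_isNormalForm_over x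
    have hy : y ∈ u (canonTuple d) := (hu.map_mem_iff j y).1 hx
    exact ⟨⟨d, y, hnf, hu.nfCoherent hy hy⟩, j, ⟨_, rfl, hy⟩, rfl⟩

end IsUniformFamily

end Trace

theorem stmt5 {n : ℕ} (F : CohTuple n ⥤ CohSpace) (hF : IsNormalFunctor F) :
    Set.BijOn (instFam F) { c | (Tr F).IsClique c } { c | IsUniformFamily F c } := by
  have := hF.1
  have := hF.2
  exact ⟨fun _ hc => isUniformFamily_instFam hc, instFam_injective.injOn,
    fun u hu => ⟨traceClique u, hu.isClique_traceClique, hu.instFam_traceClique⟩⟩
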